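/- arXiv:2401.11774 — 2 statements merged into one kernel-verified Lean document; each statement's English description precedes it below -/
import Mathlib

section
/- Assume the sign conditions hold, the kernel condition holds, and that the pair (Q − L R⁻¹ Lᵀ, A) is detectable. Then for every symmetric X̃ ∈ ℝ^{n×n} with X̃ ⪰ 0, the pair (H_c(X̃), A_c(X̃)) is detectable — i.e., for every λ ∈ ℂ with Re λ ≥ 0 and every z ∈ ℂⁿ with (A_c(X̃) − λIₙ)z = 0 and H_c(X̃)z = 0 one has z = 0 — and moreover H_c(X̃) ⪰ 0. -/
open Matrix Filter

noncomputable section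

/-- `Π₁₁(X) = Σᵢ (A₀ⁱ)ᵀ X A₀ⁱ`. -/
def Pi11 {n r : ℕ} (A0 : Fin r → Matrix (Fin n) (Fin n) ℝ)
    (X : Matrix (Fin n) (Fin n) ℝ) : Matrix (Fin n) (Fin n) ℝ :=
  ∑ i, (A0 i)ᵀ * X * A0 i

/-- `Π₁₂(X) = Σᵢ (A₀ⁱ)ᵀ X B₀ⁱ`. -/
def Pi12 {n m r : ℕ} (A0 : Fin r → Matrix (Fin n) (Fin n) ℝ)
    (B0 : Fin r → Matrix (Fin n) (Fin m) ℝ)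
    (X : Matrix (Fin n) (Fin n) ℝ) : Matrix (Fin n) (Fin m) ℝ :=
  ∑ i, (A0 i)ᵀ * X * B0 i

/-- `Π₂₂(X) = Σᵢ (B₀ⁱ)ᵀ X B₀ⁱ`. -/
def Pi22 {n m r : ℕ} (B0 : Fin r → Matrix (Fin n) (Fin m) ℝ)
    (X : Matrix (Fin n) (Fin n) ℝ) : Matrix (Fin m) (Fin m) ℝ :=
  ∑ i, (B0 i)ᵀ * X * B0 i

/-- The block matrix `Π(X) = [Π₁₁(X), Π₁₂(X); Π₁₂(X)ᵀ, Π₂₂(X)]`. -/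
def PiBlock {n m r : ℕ} (A0 : Fin r → Matrix (Fin n) (Fin n) ℝ)
    (B0 : Fin r → Matrix (Fin n) (Fin m) ℝ)
    (X : Matrix (Fin n) (Fin n) ℝ) : Matrix (Fin n ⊕ Fin m) (Fin n ⊕ Fin m) ℝ :=
  fromBlocks (Pi11 A0 X) (Pi12 A0 B0 X) (Pi12 A0 B0 X)ᵀ (Pi22 B0 X)

/-- `L_c(X) = L + Π₁₂(X)`. -/
def Lc {n m r : ℕ} (L : Matrix (Fin n) (Fin m) ℝ)
    (A0 : Fin r → Matrix (Fin n) (Fin n) ℝ) (B0 : Fin r → Matrix (Fin n) (Fin m) ℝ)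
    (X : Matrix (Fin n) (Fin n) ℝ) : Matrix (Fin n) (Fin m) ℝ :=
  L + Pi12 A0 B0 X

/-- `R_c(X) = R + Π₂₂(X)`. -/
def Rc {n m r : ℕ} (R : Matrix (Fin m) (Fin m) ℝ)
    (B0 : Fin r → Matrix (Fin n) (Fin m) ℝ)
    (X : Matrix (Fin n) (Fin n) ℝ) : Matrix (Fin m) (Fin m) ℝ :=
  R + Pi22 B0 X

/-- `Q_c(X) = Q + Π₁₁(X)`. -/
def Qc {n r : ℕ} (Q : Matrix (Fin n) (Fin n) ℝ)
    (A0 : Fin r → Matrix (Fin n) (Fin n) ℝ)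
    (X : Matrix (Fin n) (Fin n) ℝ) : Matrix (Fin n) (Fin n) ℝ :=
  Q + Pi11 A0 X

/-- `A_c(X) = A − B R_c(X)⁻¹ L_c(X)ᵀ`. -/
def Ac {n m r : ℕ} (A : Matrix (Fin n) (Fin n) ℝ) (B : Matrix (Fin n) (Fin m) ℝ)
    (L : Matrix (Fin n) (Fin m) ℝ) (R : Matrix (Fin m) (Fin m) ℝ)
    (A0 : Fin r → Matrix (Fin n) (Fin n) ℝ) (B0 : Fin r → Matrix (Fin n) (Fin m) ℝ)
    (X : Matrix (Fin n) (Fin n) ℝ) : Matrix (Fin n) (Fin n) ℝ :=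
  A - B * (Rc R B0 X)⁻¹ * (Lc L A0 B0 X)ᵀ

/-- `G_c(X) = B R_c(X)⁻¹ Bᵀ`. -/
def Gc {n m r : ℕ} (B : Matrix (Fin n) (Fin m) ℝ) (R : Matrix (Fin m) (Fin m) ℝ)
    (B0 : Fin r → Matrix (Fin n) (Fin m) ℝ)
    (X : Matrix (Fin n) (Fin n) ℝ) : Matrix (Fin n) (Fin n) ℝ :=
  B * (Rc R B0 X)⁻¹ * Bᵀ

/-- `H_c(X) = Q_c(X) − L_c(X) R_c(X)⁻¹ L_c(X)ᵀ`. -/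
def Hc {n m r : ℕ} (Q : Matrix (Fin n) (Fin n) ℝ) (L : Matrix (Fin n) (Fin m) ℝ)
    (R : Matrix (Fin m) (Fin m) ℝ)
    (A0 : Fin r → Matrix (Fin n) (Fin n) ℝ) (B0 : Fin r → Matrix (Fin n) (Fin m) ℝ)
    (X : Matrix (Fin n) (Fin n) ℝ) : Matrix (Fin n) (Fin n) ℝ :=
  Qc Q A0 X - Lc L A0 B0 X * (Rc R B0 X)⁻¹ * (Lc L A0 B0 X)ᵀ

/-- The SCARE residual
`𝓡(X) = AᵀX + XA + Q_c(X) − (XB + L_c(X)) R_c(X)⁻¹ (XB + L_c(X))ᵀ`. -/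
def scareRes {n m r : ℕ} (A : Matrix (Fin n) (Fin n) ℝ) (B : Matrix (Fin n) (Fin m) ℝ)
    (Q : Matrix (Fin n) (Fin n) ℝ) (L : Matrix (Fin n) (Fin m) ℝ)
    (R : Matrix (Fin m) (Fin m) ℝ)
    (A0 : Fin r → Matrix (Fin n) (Fin n) ℝ) (B0 : Fin r → Matrix (Fin n) (Fin m) ℝ)
    (X : Matrix (Fin n) (Fin n) ℝ) : Matrix (Fin n) (Fin n) ℝ :=
  Aᵀ * X + X * A + Qc Q A0 X -
    (X * B + Lc L A0 B0 X) * (Rc R B0 X)⁻¹ * (X * B + Lc L A0 B0 X)ᵀ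

/-- `Ω(X) = [−G_c(X), −A_c(X); −A_c(X)ᵀ, H_c(X)]`. -/
def Omega {n m r : ℕ} (A : Matrix (Fin n) (Fin n) ℝ) (B : Matrix (Fin n) (Fin m) ℝ)
    (Q : Matrix (Fin n) (Fin n) ℝ) (L : Matrix (Fin n) (Fin m) ℝ)
    (R : Matrix (Fin m) (Fin m) ℝ)
    (A0 : Fin r → Matrix (Fin n) (Fin n) ℝ) (B0 : Fin r → Matrix (Fin n) (Fin m) ℝ)
    (X : Matrix (Fin n) (Fin n) ℝ) : Matrix (Fin n ⊕ Fin n) (Fin n ⊕ Fin n) ℝ :=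
  fromBlocks (-(Gc B R B0 X)) (-(Ac A B L R A0 B0 X)) (-(Ac A B L R A0 B0 X))ᵀ
    (Hc Q L R A0 B0 X)

/-- The `2n×n` matrix `[X; −Iₙ]` stacking `X` over `−Iₙ`. -/
def stackNegI {n : ℕ} (X : Matrix (Fin n) (Fin n) ℝ) :
    Matrix (Fin n ⊕ Fin n) (Fin n) ℝ :=
  fromRows X (-1)

/-- The pair `(A, B)` is stabilizable: `yᴴ(A − λI) = 0`, `yᴴB = 0`, `Re λ ≥ 0` imply `y = 0`. -/
def Stabilizable {n m : ℕ} (A : Matrix (Fin n) (Fin n) ℝ)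
    (B : Matrix (Fin n) (Fin m) ℝ) : Prop :=
  ∀ (lam : ℂ) (y : Fin n → ℂ), 0 ≤ lam.re →
    vecMul (star y) (A.map Complex.ofReal - lam • 1) = 0 →
    vecMul (star y) (B.map Complex.ofReal) = 0 → y = 0

/-- The pair `(C, A)` is detectable: `(A − λI)z = 0`, `Cz = 0`, `Re λ ≥ 0` imply `z = 0`. -/
def Detectable {p n : ℕ} (C : Matrix (Fin p) (Fin n) ℝ)
    (A : Matrix (Fin n) (Fin n) ℝ) : Prop :=
  ∀ (lam : ℂ) (z : Fin n → ℂ), 0 ≤ lam.re →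
    mulVec (A.map Complex.ofReal - lam • 1) z = 0 →
    mulVec (C.map Complex.ofReal) z = 0 → z = 0

/-- A real square matrix is stable if all its (complex) eigenvalues have negative real part. -/
def IsStableMatrix {n : ℕ} (M : Matrix (Fin n) (Fin n) ℝ) : Prop :=
  ∀ μ ∈ spectrum ℂ (M.map Complex.ofReal), μ.re < 0

/-- Kernel condition: `(Q − LR⁻¹Lᵀ)z = 0` implies `Lᵀz = 0` and `A₀ⁱ z = 0` for all `i`. -/
def KernelCondition {n m r : ℕ} (Q : Matrix (Fin n) (Fin n) ℝ)
    (L : Matrix (Fin n) (Fin m) ℝ) (R : Matrix (Fin m) (Fin m) ℝ)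
    (A0 : Fin r → Matrix (Fin n) (Fin n) ℝ) : Prop :=
  ∀ z : Fin n → ℂ,
    mulVec ((Q - L * R⁻¹ * Lᵀ).map Complex.ofReal) z = 0 →
    mulVec (Lᵀ.map Complex.ofReal) z = 0 ∧
      ∀ i, mulVec ((A0 i).map Complex.ofReal) z = 0

/-- `Γ(X) = [[0, −A, −B], [−Aᵀ, Q_c(X), L_c(X)], [−Bᵀ, L_c(X)ᵀ, R_c(X)]]`. -/
def Gamma {n m r : ℕ} (A : Matrix (Fin n) (Fin n) ℝ) (B : Matrix (Fin n) (Fin m) ℝ)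
    (Q : Matrix (Fin n) (Fin n) ℝ) (L : Matrix (Fin n) (Fin m) ℝ)
    (R : Matrix (Fin m) (Fin m) ℝ)
    (A0 : Fin r → Matrix (Fin n) (Fin n) ℝ) (B0 : Fin r → Matrix (Fin n) (Fin m) ℝ)
    (X : Matrix (Fin n) (Fin n) ℝ) :
    Matrix ((Fin n ⊕ Fin n) ⊕ Fin m) ((Fin n ⊕ Fin n) ⊕ Fin m) ℝ :=
  fromBlocks (fromBlocks 0 (-A) (-Aᵀ) (Qc Q A0 X))
    (fromRows (-B) (Lc L A0 B0 X))
    (fromRows (-B) (Lc L A0 B0 X))ᵀ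
    (Rc R B0 X)

/-- `F_W(Y) = [Y; −Iₙ]ᵀ (Ω(Y) − Ω(W)) [Y; −Iₙ]`. -/
def FW {n m r : ℕ} (A : Matrix (Fin n) (Fin n) ℝ) (B : Matrix (Fin n) (Fin m) ℝ)
    (Q : Matrix (Fin n) (Fin n) ℝ) (L : Matrix (Fin n) (Fin m) ℝ)
    (R : Matrix (Fin m) (Fin m) ℝ)
    (A0 : Fin r → Matrix (Fin n) (Fin n) ℝ) (B0 : Fin r → Matrix (Fin n) (Fin m) ℝ)
    (W Y : Matrix (Fin n) (Fin n) ℝ) : Matrix (Fin n) (Fin n) ℝ :=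
  (stackNegI Y)ᵀ * (Omega A B Q L R A0 B0 Y - Omega A B Q L R A0 B0 W) * stackNegI Y

/-- `𝓕_W(Z) = Kᵀ Π(Z) K` with `K = [−Iₙ; R_c(W)⁻¹ (L_c(W) + W B)ᵀ]`. -/
def Fcal {n m r : ℕ} (B : Matrix (Fin n) (Fin m) ℝ)
    (L : Matrix (Fin n) (Fin m) ℝ) (R : Matrix (Fin m) (Fin m) ℝ)
    (A0 : Fin r → Matrix (Fin n) (Fin n) ℝ) (B0 : Fin r → Matrix (Fin n) (Fin m) ℝ)
    (W Z : Matrix (Fin n) (Fin n) ℝ) : Matrix (Fin n) (Fin n) ℝ :=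
  (fromRows (-1 : Matrix (Fin n) (Fin n) ℝ)
      ((Rc R B0 W)⁻¹ * (Lc L A0 B0 W + W * B)ᵀ))ᵀ *
    PiBlock A0 B0 Z *
    fromRows (-1 : Matrix (Fin n) (Fin n) ℝ)
      ((Rc R B0 W)⁻¹ * (Lc L A0 B0 W + W * B)ᵀ)

/-!
Let `M_c(X) = [Q_c(X), L_c(X); L_c(X)ᵀ, R_c(X)]`. Since `M_c(X) = [Q, L; Lᵀ, R] + Π(X)` and
`Π(X)` is a sum of congruences of `X ⪰ 0`, both summands are positive semidefinite, and `H_c(X)`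
is the Schur complement of the positive definite block `R_c(X)` in `M_c(X)`, hence `H_c(X) ⪰ 0`.

If `H_c(X) z = 0`, then `w = (z, -R_c(X)⁻¹ L_c(X)ᵀ z)` lies in the kernel of `M_c(X)`, hence in
the kernels of both summands. Taking the Schur complement of `R` in `[Q, L; Lᵀ, R]` gives
`(Q - L R⁻¹ Lᵀ) z = 0`, so the kernel condition yields `Lᵀ z = 0` and `A₀ⁱ z = 0`. Then
`L_c(X)ᵀ z = 0`, so `A_c(X) z = A z`, and detectability of `(Q - L R⁻¹ Lᵀ, A)` forces `z = 0`.
-/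

open scoped ComplexOrder

namespace Matrix

section BlockSchur

variable {α l m n : Type*} [CommRing α] [Fintype m] [DecidableEq m] [Fintype n] [DecidableEq n]

lemma fromBlocks_mul_fromRows_one_neg_inv_mul (A : Matrix l n α) (B : Matrix l m α)
    (C : Matrix m n α) {D : Matrix m m α} (hD : IsUnit D.det) :
    fromBlocks A B C D * fromRows (1 : Matrix n n α) (-(D⁻¹ * C)) =
      fromRows (A - B * D⁻¹ * C) 0 := by
  rw [fromBlocks_mul_fromRows]
  simp [Matrix.mul_neg, ← Matrix.mul_assoc, mul_nonsing_inv D hD, sub_eq_add_neg]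

lemma fromCols_one_neg_mul_inv_mul_fromBlocks (A : Matrix n l α) (B : Matrix n m α)
    (C : Matrix m l α) {D : Matrix m m α} (hD : IsUnit D.det) :
    fromCols (1 : Matrix n n α) (-(B * D⁻¹)) * fromBlocks A B C D =
      fromCols (A - B * D⁻¹ * C) 0 := by
  rw [fromCols_mul_fromBlocks]
  simp [Matrix.neg_mul, Matrix.mul_assoc, nonsing_inv_mul D hD, sub_eq_add_neg]

end BlockSchur

section OfReal

variable {m n o : Type*}

lemma map_ofReal_mul [Fintype n] (M : Matrix m n ℝ) (N : Matrix n o ℝ) :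
    (M * N).map Complex.ofReal = M.map Complex.ofReal * N.map Complex.ofReal :=
  Matrix.map_mul (f := Complex.ofRealHom)

lemma map_ofReal_sum {ι : Type*} (s : Finset ι) (f : ι → Matrix m n ℝ) :
    (∑ i ∈ s, f i).map Complex.ofReal = ∑ i ∈ s, (f i).map Complex.ofReal :=
  map_sum (Complex.ofRealHom.toAddMonoidHom.mapMatrix) f s

lemma map_ofReal_mul_mulVec [Fintype n] [Fintype o] (M : Matrix m n ℝ) (N : Matrix n o ℝ)
    (z : o → ℂ) :
    (M * N).map Complex.ofReal *ᵥ z = M.map Complex.ofReal *ᵥ (N.map Complex.ofReal *ᵥ z) := by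
  rw [map_ofReal_mul, mulVec_mulVec]

lemma PosSemidef.map_ofReal [Fintype n] [DecidableEq n] {M : Matrix n n ℝ} (hM : M.PosSemidef) :
    (M.map Complex.ofReal).PosSemidef := by
  obtain ⟨N, rfl⟩ : ∃ N : Matrix n n ℝ, M = Nᴴ * N := by
    open scoped MatrixOrder in
    exact CStarAlgebra.nonneg_iff_eq_star_mul_self.mp hM.nonneg
  have hN : Nᴴ.map Complex.ofReal = (N.map Complex.ofReal)ᴴ := by
    ext i j; simp [conjTranspose_apply]
  rw [map_ofReal_mul, hN]
  exact posSemidef_conjTranspose_mul_self _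

end OfReal

lemma PosSemidef.mulVec_eq_zero_of_add_mulVec_eq_zero {𝕜 n : Type*} [RCLike 𝕜] [Fintype n]
    {M N : Matrix n n 𝕜} (hM : M.PosSemidef) (hN : N.PosSemidef) {x : n → 𝕜}
    (hx : (M + N) *ᵥ x = 0) : M *ᵥ x = 0 := by
  have hsum : star x ⬝ᵥ M *ᵥ x + star x ⬝ᵥ N *ᵥ x = 0 := by
    rw [← dotProduct_add, ← add_mulVec, hx, dotProduct_zero]
  rw [← hM.dotProduct_mulVec_zero_iff]
  exact ((add_eq_zero_iff_of_nonneg (hM.dotProduct_mulVec_nonneg x)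
    (hN.dotProduct_mulVec_nonneg x)).mp hsum).1

end Matrix

open Matrix

variable {n m r : ℕ} {A Q : Matrix (Fin n) (Fin n) ℝ} {B L : Matrix (Fin n) (Fin m) ℝ}
  {R : Matrix (Fin m) (Fin m) ℝ} {A0 : Fin r → Matrix (Fin n) (Fin n) ℝ}
  {B0 : Fin r → Matrix (Fin n) (Fin m) ℝ} {X : Matrix (Fin n) (Fin n) ℝ}

def Mc (Q : Matrix (Fin n) (Fin n) ℝ) (L : Matrix (Fin n) (Fin m) ℝ)
    (R : Matrix (Fin m) (Fin m) ℝ) (A0 : Fin r → Matrix (Fin n) (Fin n) ℝ)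
    (B0 : Fin r → Matrix (Fin n) (Fin m) ℝ) (X : Matrix (Fin n) (Fin n) ℝ) :
    Matrix (Fin n ⊕ Fin m) (Fin n ⊕ Fin m) ℝ :=
  fromBlocks (Qc Q A0 X) (Lc L A0 B0 X) (Lc L A0 B0 X)ᵀ (Rc R B0 X)

lemma transpose_Pi12 : (Pi12 A0 B0 X)ᵀ = ∑ i, (B0 i)ᵀ * Xᵀ * A0 i := by
  simp only [Pi12, transpose_sum, transpose_mul, transpose_transpose, Matrix.mul_assoc]

lemma Mc_eq_add_PiBlock : Mc Q L R A0 B0 X = fromBlocks Q L Lᵀ R + PiBlock A0 B0 X := by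
  simp only [Mc, PiBlock, Qc, Lc, Rc, fromBlocks_add, transpose_add]

lemma PiBlock_posSemidef (hX : X.PosSemidef) : (PiBlock A0 B0 X).PosSemidef := by
  have hXt : Xᵀ = X := hX.1.eq
  have hsum : PiBlock A0 B0 X =
      ∑ i, (fromCols (A0 i) (B0 i))ᵀ * X * fromCols (A0 i) (B0 i) := by
    simp only [PiBlock, transpose_Pi12, hXt]
    ext (a | a) (b | b) <;>
      simp [Pi11, Pi22, Pi12, transpose_fromCols, fromRows_mul, Matrix.sum_apply]
  rw [hsum]
  refine posSemidef_sum _ fun i _ => ?_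
  simpa [conjTranspose_eq_transpose_of_trivial] using
    hX.conjTranspose_mul_mul_same (fromCols (A0 i) (B0 i))

lemma Rc_posDef (hR : R.PosDef) (hX : X.PosSemidef) : (Rc R B0 X).PosDef :=
  hR.add_posSemidef <| posSemidef_sum _ fun i _ => by
    simpa [conjTranspose_eq_transpose_of_trivial] using hX.conjTranspose_mul_mul_same (B0 i)

lemma Mc_posSemidef (hsign : (fromBlocks Q L Lᵀ R).PosSemidef) (hX : X.PosSemidef) :
    (Mc Q L R A0 B0 X).PosSemidef := by
  rw [Mc_eq_add_PiBlock]
  exact hsign.add (PiBlock_posSemidef hX)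

lemma Hc_posSemidef (hR : R.PosDef) (hsign : (fromBlocks Q L Lᵀ R).PosSemidef)
    (hX : X.PosSemidef) : (Hc Q L R A0 B0 X).PosSemidef := by
  have hRc := Rc_posDef (B0 := B0) hR hX
  have := hRc.isUnit.invertible
  have hM := Mc_posSemidef (A0 := A0) (B0 := B0) hsign hX
  rw [Mc, ← conjTranspose_eq_transpose_of_trivial, PosDef.fromBlocks₂₂ _ _ hRc] at hM
  rwa [conjTranspose_eq_transpose_of_trivial] at hM

lemma schur_mulVec_eq_zero_of_Hc_mulVec_eq_zero (hR : R.PosDef)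
    (hsign : (fromBlocks Q L Lᵀ R).PosSemidef) (hX : X.PosSemidef) {z : Fin n → ℂ}
    (hz : (Hc Q L R A0 B0 X).map Complex.ofReal *ᵥ z = 0) :
    (Q - L * R⁻¹ * Lᵀ).map Complex.ofReal *ᵥ z = 0 := by
  set K := fromRows (1 : Matrix (Fin n) (Fin n) ℝ) (-((Rc R B0 X)⁻¹ * (Lc L A0 B0 X)ᵀ))
  have hRc : IsUnit (Rc R B0 X).det := (isUnit_iff_isUnit_det _).mp (Rc_posDef hR hX).isUnit
  have hMw : (Mc Q L R A0 B0 X).map Complex.ofReal *ᵥ (K.map Complex.ofReal *ᵥ z) = 0 := by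
    rw [← map_ofReal_mul_mulVec, Mc, fromBlocks_mul_fromRows_one_neg_inv_mul _ _ _ hRc,
      fromRows_map, fromRows_mulVec, ← Hc, hz]
    simp
  rw [Mc_eq_add_PiBlock, Matrix.map_add _ Complex.ofReal_add] at hMw
  have hSw := hsign.map_ofReal.mulVec_eq_zero_of_add_mulVec_eq_zero
    (PiBlock_posSemidef hX).map_ofReal hMw
  have hR' : IsUnit R.det := (isUnit_iff_isUnit_det _).mp hR.isUnit
  set E := fromCols (1 : Matrix (Fin n) (Fin n) ℝ) (-(L * R⁻¹))
  calc (Q - L * R⁻¹ * Lᵀ).map Complex.ofReal *ᵥ z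
      = (E * fromBlocks Q L Lᵀ R * K).map Complex.ofReal *ᵥ z := by
        rw [fromCols_one_neg_mul_inv_mul_fromBlocks _ _ _ hR', fromCols_mul_fromRows]
        simp
    _ = 0 := by rw [map_ofReal_mul_mulVec, map_ofReal_mul_mulVec, hSw, mulVec_zero]

lemma transpose_Lc_mulVec_eq_zero {z : Fin n → ℂ} (hL : Lᵀ.map Complex.ofReal *ᵥ z = 0)
    (hA0 : ∀ i, (A0 i).map Complex.ofReal *ᵥ z = 0) :
    (Lc L A0 B0 X)ᵀ.map Complex.ofReal *ᵥ z = 0 := by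
  simp only [Lc, transpose_add, Matrix.map_add _ Complex.ofReal_add, add_mulVec, hL,
    transpose_Pi12, map_ofReal_sum, sum_mulVec, map_ofReal_mul_mulVec, hA0, mulVec_zero,
    Finset.sum_const_zero, add_zero]

lemma Ac_mulVec_eq_A_mulVec {z : Fin n → ℂ} (hz : (Lc L A0 B0 X)ᵀ.map Complex.ofReal *ᵥ z = 0) :
    (Ac A B L R A0 B0 X).map Complex.ofReal *ᵥ z = A.map Complex.ofReal *ᵥ z := by
  rw [Ac, Matrix.map_sub _ Complex.ofReal_sub, sub_mulVec, map_ofReal_mul_mulVec, hz,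
    mulVec_zero, sub_zero]

theorem stmt1_general (n m r : ℕ)
    (A Q : Matrix (Fin n) (Fin n) ℝ) (B L : Matrix (Fin n) (Fin m) ℝ)
    (R : Matrix (Fin m) (Fin m) ℝ)
    (A0 : Fin r → Matrix (Fin n) (Fin n) ℝ) (B0 : Fin r → Matrix (Fin n) (Fin m) ℝ)
    (hRpd : R.PosDef) (hsign : (fromBlocks Q L Lᵀ R).PosSemidef)
    (hker : KernelCondition Q L R A0)
    (hdet : Detectable (Q - L * R⁻¹ * Lᵀ) A) :
    ∀ Xt : Matrix (Fin n) (Fin n) ℝ, Xt.IsHermitian → Xt.PosSemidef →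
      Detectable (Hc Q L R A0 B0 Xt) (Ac A B L R A0 B0 Xt) ∧
        (Hc Q L R A0 B0 Xt).PosSemidef := by
  intro X _ hX
  refine ⟨fun lam z hlam hAcz hHcz => ?_, Hc_posSemidef hRpd hsign hX⟩
  have hSchur := schur_mulVec_eq_zero_of_Hc_mulVec_eq_zero hRpd hsign hX hHcz
  obtain ⟨hLz, hA0z⟩ := hker z hSchur
  refine hdet lam z hlam ?_ hSchur
  rwa [sub_mulVec, Ac_mulVec_eq_A_mulVec (transpose_Lc_mulVec_eq_zero hLz hA0z),
    ← sub_mulVec] at hAcz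

/-- If the sign conditions and kernel condition hold and (Q − LR⁻¹Lᵀ, A) is
detectable, then for every symmetric PSD X̃ the pair (H_c(X̃), A_c(X̃)) is
detectable and H_c(X̃) ⪰ 0. -/
theorem stmt1 (n m r : ℕ) (hn : 0 < n) (hm : 0 < m) (hr : 0 < r)
    (A Q : Matrix (Fin n) (Fin n) ℝ) (B L : Matrix (Fin n) (Fin m) ℝ)
    (R : Matrix (Fin m) (Fin m) ℝ)
    (A0 : Fin r → Matrix (Fin n) (Fin n) ℝ) (B0 : Fin r → Matrix (Fin n) (Fin m) ℝ)
    (hQ : Q.IsHermitian) (hRsymm : R.IsHermitian)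
    (hRpd : R.PosDef) (hsign : (fromBlocks Q L Lᵀ R).PosSemidef)
    (hker : KernelCondition Q L R A0)
    (hdet : Detectable (Q - L * R⁻¹ * Lᵀ) A) :
    ∀ Xt : Matrix (Fin n) (Fin n) ℝ, Xt.IsHermitian → Xt.PosSemidef →
      Detectable (Hc Q L R A0 B0 Xt) (Ac A B L R A0 B0 Xt) ∧
        (Hc Q L R A0 B0 Xt).PosSemidef :=
  stmt1_general n m r A Q B L R A0 B0 hRpd hsign hker hdet
end
end

section
/- Assume R ≻ 0. Let X, Y ∈ ℝ^{n×n} be symmetric with 0 ⪯ Y ⪯ X, and suppose [X, −Iₙ] Ω(Y) [X; −Iₙ] = 0 (i.e., X solves the CARE whose coefficients are frozen at Y). Then 𝓡(X) ⪰ 0. -/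
/-!
Put `D = X - Y ⪰ 0`, `a = L_c(Y) + XB`, `b = L_c(X) + XB`, `S = R_c(Y)`, `T = R_c(X)`; both
`S` and `T` are positive definite, and `b = a + Π₁₂(D)`, `T = S + Π₂₂(D)`. Subtracting the frozen
equation from `𝓡(X)` leaves `a S⁻¹ aᵀ + Π₁₁(D) - b T⁻¹ bᵀ`, and completing the square turns this
into `Cᵀ S C + Kᵀ Π(D) K` with `C = S⁻¹aᵀ - T⁻¹bᵀ` and `K = [-I; T⁻¹bᵀ]`, so that
`Kᵀ Π(D) K = 𝓕_X(D)`. Both terms are `⪰ 0`, since `Π(D) = ∑ᵢ [A₀ⁱ B₀ⁱ]ᵀ D [A₀ⁱ B₀ⁱ]`.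
-/

open Matrix Filter

noncomputable section

theorem Matrix.PosSemidef.transpose_mul_mul_same {ι κ R : Type*} [Fintype ι] [Fintype κ]
    [CommRing R] [PartialOrder R] [StarRing R] [TrivialStar R] {P : Matrix ι ι R}
    (hP : P.PosSemidef) (K : Matrix ι κ R) : (Kᵀ * P * K).PosSemidef := by
  simpa only [conjTranspose_eq_transpose_of_trivial] using hP.conjTranspose_mul_mul_same K

section CompletingSquares

variable {ι κ α : Type*} [Fintype ι] [DecidableEq ι] [Fintype κ] [DecidableEq κ] [CommRing α]

theorem mul_nonsing_inv_mul_transpose_add_sub_eq {S T : Matrix κ κ α} (hS : S.IsSymm)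
    (hT : T.IsSymm) (hSu : IsUnit S.det) (hTu : IsUnit T.det) (a b : Matrix ι κ α)
    (P : Matrix ι ι α) :
    a * S⁻¹ * aᵀ + P - b * T⁻¹ * bᵀ =
      (S⁻¹ * aᵀ - T⁻¹ * bᵀ)ᵀ * S * (S⁻¹ * aᵀ - T⁻¹ * bᵀ) +
        (fromRows (-1 : Matrix ι ι α) (T⁻¹ * bᵀ))ᵀ * fromBlocks P (b - a) (b - a)ᵀ (T - S) *
          fromRows (-1 : Matrix ι ι α) (T⁻¹ * bᵀ) := by
  have hSinv : (S⁻¹)ᵀ = S⁻¹ := by rw [transpose_nonsing_inv, hS.eq]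
  have hTinv : (T⁻¹)ᵀ = T⁻¹ := by rw [transpose_nonsing_inv, hT.eq]
  rw [transpose_fromRows, fromCols_mul_fromBlocks, fromCols_mul_fromRows]
  simp only [transpose_sub, transpose_mul, transpose_neg, transpose_one, transpose_transpose,
    hSinv, hTinv, Matrix.mul_sub, Matrix.sub_mul, Matrix.neg_mul, Matrix.mul_neg, Matrix.one_mul,
    Matrix.mul_one, Matrix.add_mul, Matrix.mul_assoc, mul_nonsing_inv_cancel_left _ _ hSu,
    nonsing_inv_mul_cancel_left _ _ hSu, nonsing_inv_mul _ hTu]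
  abel

end CompletingSquares

section StochasticRiccati

variable {n m r : ℕ} (A Q : Matrix (Fin n) (Fin n) ℝ) (B L : Matrix (Fin n) (Fin m) ℝ)
  (R : Matrix (Fin m) (Fin m) ℝ)
  (A0 : Fin r → Matrix (Fin n) (Fin n) ℝ) (B0 : Fin r → Matrix (Fin n) (Fin m) ℝ)

theorem Pi11_sub (X Y : Matrix (Fin n) (Fin n) ℝ) : Pi11 A0 (X - Y) = Pi11 A0 X - Pi11 A0 Y := by
  simp only [Pi11, Matrix.mul_sub, Matrix.sub_mul, Finset.sum_sub_distrib]

theorem Pi12_sub (X Y : Matrix (Fin n) (Fin n) ℝ) :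
    Pi12 A0 B0 (X - Y) = Pi12 A0 B0 X - Pi12 A0 B0 Y := by
  simp only [Pi12, Matrix.mul_sub, Matrix.sub_mul, Finset.sum_sub_distrib]

theorem Pi22_sub (X Y : Matrix (Fin n) (Fin n) ℝ) : Pi22 B0 (X - Y) = Pi22 B0 X - Pi22 B0 Y := by
  simp only [Pi22, Matrix.mul_sub, Matrix.sub_mul, Finset.sum_sub_distrib]

theorem PiBlock_eq_sum {X : Matrix (Fin n) (Fin n) ℝ} (hX : X.IsSymm) :
    PiBlock A0 B0 X = ∑ i, (fromCols (A0 i) (B0 i))ᵀ * X * fromCols (A0 i) (B0 i) := by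
  have hPi12 : (Pi12 A0 B0 X)ᵀ = ∑ i, (B0 i)ᵀ * X * A0 i := by
    simp only [Pi12, transpose_sum, transpose_mul, transpose_transpose, hX.eq, Matrix.mul_assoc]
  rw [PiBlock, hPi12]
  simp only [transpose_fromCols, fromRows_mul]
  ext (i | i) (j | j) <;> simp [Pi11, Pi12, Pi22, Matrix.sum_apply]

theorem posSemidef_PiBlock {X : Matrix (Fin n) (Fin n) ℝ} (hX : X.PosSemidef) :
    (PiBlock A0 B0 X).PosSemidef := by
  rw [PiBlock_eq_sum A0 B0 (isHermitian_iff_isSymm.mp hX.isHermitian)]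
  exact posSemidef_sum _ fun i _ => hX.transpose_mul_mul_same _

theorem posSemidef_Fcal (W : Matrix (Fin n) (Fin n) ℝ) {Z : Matrix (Fin n) (Fin n) ℝ}
    (hZ : Z.PosSemidef) : (Fcal B L R A0 B0 W Z).PosSemidef :=
  (posSemidef_PiBlock A0 B0 hZ).transpose_mul_mul_same _

theorem posDef_Rc {X : Matrix (Fin n) (Fin n) ℝ} (hR : R.PosDef) (hX : X.PosSemidef) :
    (Rc R B0 X).PosDef :=
  hR.add_posSemidef (posSemidef_sum _ fun i _ => hX.transpose_mul_mul_same (B0 i))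

theorem stackNegI_transpose_mul_Omega_mul_stackNegI {X Y : Matrix (Fin n) (Fin n) ℝ}
    (hX : X.IsSymm) (hRY : (Rc R B0 Y).IsSymm) :
    (stackNegI X)ᵀ * Omega A B Q L R A0 B0 Y * stackNegI X =
      Aᵀ * X + X * A + Qc Q A0 Y -
        (Lc L A0 B0 Y + X * B) * (Rc R B0 Y)⁻¹ * (Lc L A0 B0 Y + X * B)ᵀ := by
  have hRYinv : ((Rc R B0 Y)⁻¹)ᵀ = (Rc R B0 Y)⁻¹ := by rw [transpose_nonsing_inv, hRY.eq]
  rw [stackNegI, Omega, transpose_fromRows, fromCols_mul_fromBlocks, fromCols_mul_fromRows]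
  simp only [Gc, Ac, Hc, transpose_neg, transpose_one, transpose_mul, transpose_sub,
    transpose_add, transpose_transpose, hX.eq, hRYinv, Matrix.mul_add, Matrix.add_mul,
    Matrix.sub_mul, Matrix.mul_sub, Matrix.neg_mul, Matrix.mul_neg, Matrix.one_mul,
    Matrix.mul_one, Matrix.mul_assoc]
  abel

theorem scareRes_eq_frozen_add {X Y : Matrix (Fin n) (Fin n) ℝ} (hX : X.IsSymm)
    (hRY : (Rc R B0 Y).PosDef) (hRX : (Rc R B0 X).PosDef) :
    scareRes A B Q L R A0 B0 X =
      (stackNegI X)ᵀ * Omega A B Q L R A0 B0 Y * stackNegI X +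
        ((Rc R B0 Y)⁻¹ * (Lc L A0 B0 Y + X * B)ᵀ - (Rc R B0 X)⁻¹ * (Lc L A0 B0 X + X * B)ᵀ)ᵀ *
          Rc R B0 Y *
          ((Rc R B0 Y)⁻¹ * (Lc L A0 B0 Y + X * B)ᵀ - (Rc R B0 X)⁻¹ * (Lc L A0 B0 X + X * B)ᵀ) +
        Fcal B L R A0 B0 X (X - Y) := by
  have hRYsymm := isHermitian_iff_isSymm.mp hRY.isHermitian
  have hRXsymm := isHermitian_iff_isSymm.mp hRX.isHermitian
  have hPi12 : Pi12 A0 B0 (X - Y) = (Lc L A0 B0 X + X * B) - (Lc L A0 B0 Y + X * B) := by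
    rw [Pi12_sub, Lc, Lc]; abel
  have hPi22 : Pi22 B0 (X - Y) = Rc R B0 X - Rc R B0 Y := by
    rw [Pi22_sub, Rc, Rc]; abel
  rw [stackNegI_transpose_mul_Omega_mul_stackNegI A Q B L R A0 B0 hX hRYsymm, add_assoc,
    Fcal, PiBlock, hPi12, hPi22, Pi11_sub,
    ← mul_nonsing_inv_mul_transpose_add_sub_eq hRYsymm hRXsymm
      ((isUnit_iff_isUnit_det _).mp hRY.isUnit) ((isUnit_iff_isUnit_det _).mp hRX.isUnit)]
  rw [scareRes, Qc, Qc, add_comm (X * B)]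
  abel

end StochasticRiccati

theorem stmt9_general (n m r : ℕ)
    (A Q : Matrix (Fin n) (Fin n) ℝ) (B L : Matrix (Fin n) (Fin m) ℝ)
    (R : Matrix (Fin m) (Fin m) ℝ)
    (A0 : Fin r → Matrix (Fin n) (Fin n) ℝ) (B0 : Fin r → Matrix (Fin n) (Fin m) ℝ)
    (hRpd : R.PosDef)
    (X Y : Matrix (Fin n) (Fin n) ℝ)
    (hYpsd : Y.PosSemidef) (hYX : (X - Y).PosSemidef)
    (hfroz : (stackNegI X)ᵀ * Omega A B Q L R A0 B0 Y * stackNegI X = 0) :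
    (scareRes A B Q L R A0 B0 X).PosSemidef := by
  have hXpsd : X.PosSemidef := by simpa using hYX.add hYpsd
  have hRY := posDef_Rc R B0 hRpd hYpsd
  have hRX := posDef_Rc R B0 hRpd hXpsd
  have hXsymm := isHermitian_iff_isSymm.mp hXpsd.isHermitian
  rw [scareRes_eq_frozen_add A Q B L R A0 B0 hXsymm hRY hRX, hfroz, zero_add]
  exact (hRY.posSemidef.transpose_mul_mul_same _).add (posSemidef_Fcal B L R A0 B0 X hYX)

/-- If R ≻ 0, 0 ⪯ Y ⪯ X and X solves the CARE frozen at Y, then 𝓡(X) ⪰ 0. -/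
theorem stmt9 (n m r : ℕ) (hn : 0 < n) (hm : 0 < m) (hr : 0 < r)
    (A Q : Matrix (Fin n) (Fin n) ℝ) (B L : Matrix (Fin n) (Fin m) ℝ)
    (R : Matrix (Fin m) (Fin m) ℝ)
    (A0 : Fin r → Matrix (Fin n) (Fin n) ℝ) (B0 : Fin r → Matrix (Fin n) (Fin m) ℝ)
    (hQ : Q.IsHermitian) (hRsymm : R.IsHermitian)
    (hRpd : R.PosDef)
    (X Y : Matrix (Fin n) (Fin n) ℝ)
    (hX : X.IsHermitian) (hY : Y.IsHermitian)
    (hYpsd : Y.PosSemidef) (hYX : (X - Y).PosSemidef)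
    (hfroz : (stackNegI X)ᵀ * Omega A B Q L R A0 B0 Y * stackNegI X = 0) :
    (scareRes A B Q L R A0 B0 X).PosSemidef :=
  stmt9_general n m r A Q B L R A0 B0 hRpd X Y hYpsd hYX hfroz
end
end
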